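/- Let p, c_p be as above. Then for every w ∈ ℂ^N and every t > 0 the integral ∫_{ℝ^N} e^{−p(t(τ − w))} t^N dτ converges absolutely and c_p ∫_{ℝ^N} e^{−p(t(τ − w))} t^N dτ = 1. -/

import Mathlib

open MeasureTheory Metric Complex Filter

noncomputable section

/-- The canonical embedding of `ℝ^N` into `ℂ^N`. -/
def cV {N : ℕ} (x : EuclideanSpace ℝ (Fin N)) : EuclideanSpace ℂ (Fin N) :=
  WithLp.toLp 2 (fun j => (x j : ℂ))

/-- `p` is a homogeneous polynomial of degree `2k` on `ℂ^N` with real coefficients. -/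
def IsRealHomog {N : ℕ} (k : ℕ) (p : EuclideanSpace ℂ (Fin N) → ℂ) : Prop :=
  ∃ (a : (Fin N → ℕ) → ℝ) (S : Finset (Fin N → ℕ)),
    (∀ α ∈ S, ∑ j, α j = 2 * k) ∧
    ∀ z : EuclideanSpace ℂ (Fin N), p z = ∑ α ∈ S, (a α : ℂ) * ∏ j, z j ^ α j

/-!
Write `w = u + i v` with `u, v ∈ ℝ^N`. Homogeneity and compactness of the unit sphere upgrade the
coercivity of `Re p` on `ℝ^N` to `Re p(x - ζ) ≥ (c/2)|x|^{2k} - E` uniformly for `ζ` in a compact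
set, so `e^{-p(τ - ζ)}` is dominated by an integrable function of `τ`. Hence
`f(s) = ∫ e^{-p(τ - s v)} dτ` is entire (differentiation under the integral sign, with Cauchy's
estimate bounding the derivative). A real translation of `τ` shows `f(s + r) = f(s)` for real `r`,
so `f` is constant and, translating `τ` by `u`, `∫ e^{-p(τ - w)} dτ = f(i) = f(0) = c_p⁻¹`.
The factor `t^N` is absorbed by the substitution `τ ↦ tτ`.
-/

theorem integrable_exp_neg_mul_norm_pow {E : Type*} [NormedAddCommGroup E] [NormedSpace ℝ E]
    [FiniteDimensional ℝ E] [MeasurableSpace E] [BorelSpace E] (μ : Measure E)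
    [μ.IsAddHaarMeasure] {b : ℝ} (hb : 0 < b) {d : ℕ} (hd : 0 < d) :
    Integrable (fun x : E => Real.exp (-b * ‖x‖ ^ d)) μ := by
  rcases subsingleton_or_nontrivial E with hE | hE
  · have : CompactSpace E := Finite.compactSpace
    exact (integrable_const (Real.exp (-b * ‖(0 : E)‖ ^ d))).congr
      (.of_forall fun x => by rw [Subsingleton.elim x 0])
  · have hdim : (1 : ℝ) ≤ Module.finrank ℝ E := by exact_mod_cast Module.finrank_pos
    rw [integrable_fun_norm_addHaar μ (f := fun y => Real.exp (-b * y ^ d))]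
    refine (integrableOn_rpow_mul_exp_neg_mul_rpow (s := Module.finrank ℝ E - 1) (p := d)
      (by linarith) (by exact_mod_cast hd) hb).congr_fun (fun y _ => ?_) measurableSet_Ioi
    rw [smul_eq_mul, ← Real.rpow_natCast y d, ← Real.rpow_natCast y (Module.finrank ℝ E - 1),
      Nat.cast_sub Module.finrank_pos, Nat.cast_one]

theorem Differentiable.apply_eq_of_forall_add_ofReal {E : Type*} [NormedAddCommGroup E]
    [NormedSpace ℂ E] {f : ℂ → E} (hf : Differentiable ℂ f)
    (hper : ∀ (s : ℂ) (r : ℝ), f (s + r) = f s) (s s' : ℂ) : f s = f s' := by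
  refine is_const_of_deriv_eq_zero hf (fun s => ?_) s s'
  have hline : HasDerivAt (fun r : ℝ => f (s + r)) (_root_.deriv f s) 0 := by
    have := ((hf (s + (0 : ℝ))).hasDerivAt.comp_const_add s ((0 : ℝ) : ℂ)).scomp (0 : ℝ)
      ofRealCLM.hasDerivAt
    simpa [Function.comp_def] using this
  simp only [hper] at hline
  exact hline.unique (hasDerivAt_const _ _)

theorem differentiable_integral_of_locally_dominated {α E : Type*} [TopologicalSpace α]
    [SecondCountableTopology α] [MeasurableSpace α] [OpensMeasurableSpace α] {μ : Measure α}
    [NormedAddCommGroup E] [NormedSpace ℂ E] [CompleteSpace E] {F : α → ℂ → E}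
    (hcont : Continuous F.uncurry) (hdiff : ∀ x, Differentiable ℂ (F x))
    (hbound : ∀ s₀, ∃ r > 0, ∃ b : α → ℝ, Integrable b μ ∧ ∀ x, ∀ s ∈ ball s₀ r, ‖F x s‖ ≤ b x) :
    Differentiable ℂ fun s => ∫ x, F x s ∂μ := by
  intro s₀
  obtain ⟨r, hr, b, hb, hFb⟩ := hbound s₀
  have hmeas (s : ℂ) : AEStronglyMeasurable (fun x => F x s) μ :=
    (hcont.comp (continuous_id.prodMk continuous_const)).aestronglyMeasurable
  have hderiv_le : ∀ x, ∀ s ∈ ball s₀ (r / 2), ‖deriv (F x) s‖ ≤ b x / (r / 2) := by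
    refine fun x s hs => norm_deriv_le_of_forall_mem_sphere_norm_le (half_pos hr)
      (hdiff x).diffContOnCl fun z hz => hFb x z ?_
    rw [mem_sphere] at hz
    rw [mem_ball] at hs ⊢
    linarith [dist_triangle z s s₀]
  have hint : Integrable (fun x => F x s₀) μ :=
    hb.mono' (hmeas s₀) (.of_forall fun x => hFb x s₀ (mem_ball_self hr))
  have hderiv_meas : AEStronglyMeasurable (fun x => deriv (F x) s₀) μ :=
    ((stronglyMeasurable_deriv_with_param hcont).comp_measurable
      (measurable_id.prodMk measurable_const)).aestronglyMeasurable
  exact (hasDerivAt_integral_of_dominated_loc_of_deriv_le (F := fun s x => F x s)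
    (ball_mem_nhds s₀ (half_pos hr)) (.of_forall hmeas) hint hderiv_meas
    (.of_forall hderiv_le) (hb.div_const _)
    (.of_forall fun x s _ => (hdiff x s).hasDerivAt)).2.differentiableAt

theorem exists_lower_bound_apply_sub_of_homogeneous {V W : Type*} [NormedAddCommGroup V]
    [NormedSpace ℝ V] [FiniteDimensional ℝ V] [NormedAddCommGroup W] [NormedSpace ℝ W]
    (ι : V →ₗ[ℝ] W) {q : W → ℝ} (hq : Continuous q) {d : ℕ}
    (hhom : ∀ r : ℝ, 0 < r → ∀ z, q (r • z) = r ^ d * q z) {c : ℝ} (hc : 0 < c)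
    (hlow : ∀ x, c * ‖x‖ ^ d ≤ q (ι x)) {K : Set W} (hK : IsCompact K) :
    ∃ E, ∀ x, ∀ w ∈ K, c / 2 * ‖x‖ ^ d - E ≤ q (ι x - w) := by
  have hι : Continuous ι := ι.continuous_of_finiteDimensional
  obtain ⟨δ, hδ, hnear⟩ :
      ∃ δ > 0, ∀ ζ : W, ‖ζ‖ < δ → ∀ e ∈ sphere (0 : V) 1, c / 2 < q (ι e - ζ) := by
    have hev := (isCompact_sphere (0 : V) 1).eventually_forall_of_forall_eventually
      (x₀ := (0 : W)) (P := fun ζ e => c / 2 < q (ι e - ζ)) fun e he => by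
        have hcont : Continuous fun z : W × V => q (ι z.2 - z.1) := by fun_prop
        refine hcont.continuousAt.eventually (lt_mem_nhds ?_)
        have := hlow e
        rw [mem_sphere_zero_iff_norm.1 he, one_pow, mul_one] at this
        simp only [sub_zero]
        linarith
    obtain ⟨δ, hδ, h⟩ := Metric.eventually_nhds_iff.1 hev
    exact ⟨δ, hδ, fun ζ hζ => h (by simpa using hζ)⟩
  obtain ⟨M, hM⟩ := hK.isBounded.exists_norm_le
  obtain ⟨E₀, hE₀⟩ := ((isCompact_closedBall (0 : V) (M / δ)).prod hK).exists_bound_of_continuousOn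
    (f := fun z : V × W => q (ι z.1 - z.2)) (by fun_prop : Continuous _).continuousOn
  refine ⟨c / 2 * (M / δ) ^ d + |E₀|, fun x w hw => ?_⟩
  rcases le_or_gt (δ * ‖x‖) M with hx | hx
  · have hxM : ‖x‖ ≤ M / δ := by rwa [le_div_iff₀' hδ]
    have hqE := hE₀ (x, w) ⟨mem_closedBall_zero_iff.2 hxM, hw⟩
    have hpow : c / 2 * ‖x‖ ^ d ≤ c / 2 * (M / δ) ^ d := by gcongr
    rw [Real.norm_eq_abs] at hqE
    linarith [(abs_le.1 hqE).1, le_abs_self E₀]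
  · have hx0 : 0 < ‖x‖ := by
      have := (norm_nonneg w).trans (hM w hw)
      nlinarith
    -- rescale to the unit sphere, where the perturbation `w / ‖x‖` is smaller than `δ`
    have hsplit : ι x - w = ‖x‖ • (ι (‖x‖⁻¹ • x) - ‖x‖⁻¹ • w) := by
      rw [map_smul, smul_sub, smul_inv_smul₀ hx0.ne', smul_inv_smul₀ hx0.ne']
    have hζ : ‖‖x‖⁻¹ • w‖ < δ := by
      rw [norm_smul, norm_inv, norm_norm, inv_mul_lt_iff₀ hx0]
      linarith [hM w hw]
    have hq_near := hnear _ hζ (‖x‖⁻¹ • x) (by simp [norm_smul, hx0.ne'])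
    rw [hsplit, hhom _ hx0]
    have : 0 < ‖x‖ ^ d := by positivity
    nlinarith [abs_nonneg E₀, pow_nonneg (div_nonneg ((norm_nonneg w).trans (hM w hw)) hδ.le) d]

section
variable {N : ℕ}

def cVₗ : EuclideanSpace ℝ (Fin N) →ₗ[ℝ] EuclideanSpace ℂ (Fin N) where
  toFun := cV
  map_add' x y := by ext j; simp [cV]
  map_smul' r x := by ext j; simp [cV]

theorem cV_sub (x y : EuclideanSpace ℝ (Fin N)) : cV (x - y) = cV x - cV y := map_sub cVₗ x y

theorem cV_smul (r : ℝ) (x : EuclideanSpace ℝ (Fin N)) : cV (r • x) = r • cV x :=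
  map_smul cVₗ r x

theorem continuous_cV : Continuous (cV (N := N)) := cVₗ.continuous_of_finiteDimensional

theorem integral_comp_cV_sub_add_cV (g : EuclideanSpace ℂ (Fin N) → ℂ)
    (w : EuclideanSpace ℂ (Fin N)) (u : EuclideanSpace ℝ (Fin N)) :
    ∫ τ, g (cV τ - (w + cV u)) = ∫ τ, g (cV τ - w) := by
  rw [← integral_sub_right_eq_self (fun τ => g (cV τ - w)) u]
  simp only [cV_sub, sub_sub, add_comm]

end

namespace IsRealHomog

variable {N k : ℕ} {p : EuclideanSpace ℂ (Fin N) → ℂ}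

theorem differentiable (hp : IsRealHomog k p) : Differentiable ℂ p := by
  obtain ⟨a, S, -, hform⟩ := hp
  rw [funext hform]
  fun_prop

theorem map_smul (hp : IsRealHomog k p) (t : ℝ) (z : EuclideanSpace ℂ (Fin N)) :
    p (t • z) = (t : ℂ) ^ (2 * k) * p z := by
  obtain ⟨a, S, hS, hform⟩ := hp
  rw [hform, hform, Finset.mul_sum]
  refine Finset.sum_congr rfl fun α hα => ?_
  simp only [PiLp.smul_apply, Complex.real_smul, mul_pow, Finset.prod_mul_distrib,
    Finset.prod_pow_eq_pow_sum, hS α hα]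
  ring

theorem ofReal_re_apply_cV (hp : IsRealHomog k p) (x : EuclideanSpace ℝ (Fin N)) :
    ((p (cV x)).re : ℂ) = p (cV x) := by
  obtain ⟨a, S, -, hform⟩ := hp
  have hreal : p (cV x) = ((∑ α ∈ S, a α * ∏ j, x j ^ α j : ℝ) : ℂ) := by
    rw [hform]
    push_cast
    rfl
  rw [hreal, ofReal_re]

theorem exists_integrable_bound (hp : IsRealHomog k p) (hk : 1 ≤ k) {c : ℝ} (hc : 0 < c)
    (hlow : ∀ x : EuclideanSpace ℝ (Fin N), c * ‖x‖ ^ (2 * k) ≤ (p (cV x)).re)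
    {K : Set (EuclideanSpace ℂ (Fin N))} (hK : IsCompact K) :
    ∃ b : EuclideanSpace ℝ (Fin N) → ℝ, Integrable b ∧
      ∀ τ, ∀ w ∈ K, ‖cexp (-p (cV τ - w))‖ ≤ b τ := by
  obtain ⟨E, hE⟩ := exists_lower_bound_apply_sub_of_homogeneous cVₗ (q := fun z => (p z).re)
    (continuous_re.comp hp.differentiable.continuous)
    (fun r _ z => by simp only [hp.map_smul, ← ofReal_pow, re_ofReal_mul]) hc hlow hK
  refine ⟨fun τ => Real.exp E * Real.exp (-(c / 2) * ‖τ‖ ^ (2 * k)),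
    (integrable_exp_neg_mul_norm_pow volume (by positivity) (by omega)).const_mul _,
    fun τ w hw => ?_⟩
  have hτ : c / 2 * ‖τ‖ ^ (2 * k) - E ≤ (p (cV τ - w)).re := hE τ w hw
  beta_reduce
  rw [norm_exp, neg_re, ← Real.exp_add]
  exact Real.exp_le_exp.2 (by linarith)

theorem integrable_cexp_neg_cV_sub (hp : IsRealHomog k p) (hk : 1 ≤ k) {c : ℝ} (hc : 0 < c)
    (hlow : ∀ x : EuclideanSpace ℝ (Fin N), c * ‖x‖ ^ (2 * k) ≤ (p (cV x)).re)
    (w : EuclideanSpace ℂ (Fin N)) :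
    Integrable fun τ => cexp (-p (cV τ - w)) := by
  obtain ⟨b, hb, hbound⟩ := hp.exists_integrable_bound hk hc hlow isCompact_singleton
  have hp_cont := hp.differentiable.continuous
  have hcV := continuous_cV (N := N)
  exact hb.mono' (by fun_prop : Continuous _).aestronglyMeasurable
    (.of_forall fun τ => hbound τ w rfl)

theorem integral_cexp_neg_cV_sub (hp : IsRealHomog k p) (hk : 1 ≤ k) {c : ℝ} (hc : 0 < c)
    (hlow : ∀ x : EuclideanSpace ℝ (Fin N), c * ‖x‖ ^ (2 * k) ≤ (p (cV x)).re)
    (w : EuclideanSpace ℂ (Fin N)) :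
    ∫ τ, cexp (-p (cV τ - w)) = ∫ τ, cexp (-p (cV τ)) := by
  set u : EuclideanSpace ℝ (Fin N) := WithLp.toLp 2 fun j => (w j).re
  set v : EuclideanSpace ℝ (Fin N) := WithLp.toLp 2 fun j => (w j).im
  have hw : w = I • cV v + cV u := by
    ext j
    apply Complex.ext <;> simp [u, v, cV]
  set f : ℂ → ℂ := fun s => ∫ τ, cexp (-p (cV τ - s • cV v))
  have hp_diff := hp.differentiable
  have hp_cont := hp_diff.continuous
  have hcV := continuous_cV (N := N)
  have hf : Differentiable ℂ f := by
    refine differentiable_integral_of_locally_dominated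
      (F := fun τ s => cexp (-p (cV τ - s • cV v))) (by fun_prop) (fun τ => by fun_prop)
      fun s₀ => ?_
    obtain ⟨b, hb, hbound⟩ := hp.exists_integrable_bound hk hc hlow
      ((isCompact_closedBall s₀ 1).image (continuous_id.smul continuous_const))
    exact ⟨1, one_pos, b, hb, fun τ s hs => hbound τ _ ⟨s, ball_subset_closedBall hs, rfl⟩⟩
  -- shifting the parameter `s` by a real number `r` shifts the integrand by the real vector `r v`
  have hper (s : ℂ) (r : ℝ) : f (s + r) = f s := by
    simp only [f, add_smul, Complex.coe_smul, ← cV_smul]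
    exact integral_comp_cV_sub_add_cV (fun z => cexp (-p z)) _ _
  calc ∫ τ, cexp (-p (cV τ - w)) = f I := by
        rw [hw]
        exact integral_comp_cV_sub_add_cV (fun z => cexp (-p z)) _ _
    _ = f 0 := hf.apply_eq_of_forall_add_ofReal hper _ _
    _ = ∫ τ, cexp (-p (cV τ)) := by simp [f]

theorem integral_cexp_neg_cV (hp : IsRealHomog k p) :
    ∫ τ, cexp (-p (cV τ)) = ((∫ x, Real.exp (-(p (cV x)).re) : ℝ) : ℂ) := by
  rw [← integral_complex_ofReal]
  congr with x
  rw [ofReal_exp, ofReal_neg, hp.ofReal_re_apply_cV]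

end IsRealHomog

theorem stmt3_general (N k : ℕ) (hk : 1 ≤ k)
    (p : EuclideanSpace ℂ (Fin N) → ℂ) (hp : IsRealHomog k p)
    (c : ℝ) (hc : 0 < c)
    (hlow : ∀ x : EuclideanSpace ℝ (Fin N), c * ‖x‖ ^ (2 * k) ≤ (p (cV x)).re)
    (cp : ℝ) (hcp : 0 < cp)
    (hcpdef : cp⁻¹ = ∫ x : EuclideanSpace ℝ (Fin N), Real.exp (-(p (cV x)).re)) :
    ∀ w : EuclideanSpace ℂ (Fin N), ∀ t : ℝ, 0 < t →
      Integrable (fun τ : EuclideanSpace ℝ (Fin N) =>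
          Complex.exp (-(p (t • (cV τ - w)))) * (t : ℂ) ^ N) ∧
      (cp : ℂ) * ∫ τ : EuclideanSpace ℝ (Fin N),
          Complex.exp (-(p (t • (cV τ - w)))) * (t : ℂ) ^ N = 1 := by
  intro w t ht
  have hscale (τ : EuclideanSpace ℝ (Fin N)) : t • (cV τ - w) = cV (t • τ) - t • w := by
    rw [smul_sub, cV_smul]
  simp only [hscale]
  refine ⟨((hp.integrable_cexp_neg_cV_sub hk hc hlow (t • w)).comp_smul ht.ne').mul_const _, ?_⟩
  rw [integral_mul_const, Measure.integral_comp_smul volume (fun τ => cexp (-p (cV τ - t • w))),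
    hp.integral_cexp_neg_cV_sub hk hc hlow, hp.integral_cexp_neg_cV, ← hcpdef,
    finrank_euclideanSpace_fin, abs_of_pos (by positivity), real_smul]
  have hcp' : (cp : ℂ) ≠ 0 := ofReal_ne_zero.2 hcp.ne'
  have ht' : (t : ℂ) ≠ 0 := ofReal_ne_zero.2 ht.ne'
  push_cast
  field_simp

/-- Normalization (property (2) of a good phase function):
for every `w ∈ ℂ^N` and `t > 0`, `∫ e^{-p(t(τ-w))} t^N dτ` converges absolutely and
`c_p ∫ e^{-p(t(τ-w))} t^N dτ = 1`. -/
theorem stmt3 (N k : ℕ) (hN : 1 ≤ N) (hk : 1 ≤ k)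
    (p : EuclideanSpace ℂ (Fin N) → ℂ) (hp : IsRealHomog k p)
    (c C : ℝ) (hc : 0 < c) (hC : 0 < C)
    (hlow : ∀ x : EuclideanSpace ℝ (Fin N), c * ‖x‖ ^ (2 * k) ≤ (p (cV x)).re)
    (hupp : ∀ x : EuclideanSpace ℝ (Fin N), (p (cV x)).re ≤ C * ‖x‖ ^ (2 * k))
    (cp : ℝ) (hcp : 0 < cp)
    (hcpdef : cp⁻¹ = ∫ x : EuclideanSpace ℝ (Fin N), Real.exp (-(p (cV x)).re)) :
    ∀ w : EuclideanSpace ℂ (Fin N), ∀ t : ℝ, 0 < t →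
      Integrable (fun τ : EuclideanSpace ℝ (Fin N) =>
          Complex.exp (-(p (t • (cV τ - w)))) * (t : ℂ) ^ N) ∧
      (cp : ℂ) * ∫ τ : EuclideanSpace ℝ (Fin N),
          Complex.exp (-(p (t • (cV τ - w)))) * (t : ℂ) ^ N = 1 :=
  stmt3_general N k hk p hp c hc hlow cp hcp hcpdef

end
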